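/- arXiv:2603.25536 — 4 statements merged into one kernel-verified Lean document; each statement's English description precedes it below -/
import Mathlib

section
/- Let w > 0 and let f : ℝ → ℝ be convex and integrable against Gaussian weights. Then the integral I(w) = ∫ f(x) · exp(-w·x²/2) · √(w/(2π)) dx over ℝ is non-increasing in w; equivalently, if 0 < w₁ ≤ w₂ then I(w₂) ≤ I(w₁). -/
open MeasureTheory Real

/-- The simplest Gaussian convex inequality: `I(w) = ∫ f(x) e^{-w x²/2} √(w/(2π)) dx`
is non-increasing in `w > 0` for convex `f`. -/
theorem gaussian_convex_monotone (f : ℝ → ℝ) (hf : ConvexOn ℝ Set.univ f)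
    (hint : ∀ w : ℝ, 0 < w →
      Integrable (fun x : ℝ => f x * Real.exp (-w * x ^ 2 / 2) * Real.sqrt (w / (2 * π))))
    (w₁ w₂ : ℝ) (hw₁ : 0 < w₁) (h12 : w₁ ≤ w₂) :
    ∫ x : ℝ, f x * Real.exp (-w₂ * x ^ 2 / 2) * Real.sqrt (w₂ / (2 * π)) ≤
      ∫ x : ℝ, f x * Real.exp (-w₁ * x ^ 2 / 2) * Real.sqrt (w₁ / (2 * π)) := by
  
  have hw₂ : 0 < w₂ := lt_of_lt_of_le hw₁ h12
  have hπ : 0 < 2 * π := by positivity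
  set c : ℝ := Real.sqrt (w₁ / w₂) with hc
  have hc0 : 0 < c := Real.sqrt_pos.2 (div_pos hw₁ hw₂)
  have hc1 : c ≤ 1 := by
    rw [hc, show (1:ℝ) = Real.sqrt 1 by simp]
    exact Real.sqrt_le_sqrt (by rw [div_le_one hw₂]; exact h12)
  have hcsq : c ^ 2 * w₂ = w₁ := by
    rw [hc, sq_sqrt (le_of_lt (div_pos hw₁ hw₂))]
    field_simp
  -- the Gaussian weight for w₁
  set g : ℝ → ℝ := fun x => Real.exp (-w₁ * x ^ 2 / 2) * Real.sqrt (w₁ / (2 * π)) with hg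
  have hg0 : ∀ x, 0 ≤ g x := fun x => by positivity
  have hgint : Integrable g := by
    apply Integrable.mul_const
    have := integrable_exp_neg_mul_sq (show (0:ℝ) < w₁ / 2 by positivity)
    convert this using 2 with x
    ring_nf
  have hgnorm : ∫ x : ℝ, g x = 1 := by
    rw [hg]
    simp only
    rw [integral_mul_const]
    have : (fun x : ℝ => Real.exp (-w₁ * x ^ 2 / 2)) = fun x : ℝ => Real.exp (-(w₁/2) * x ^ 2) := by
      funext x; ring_nf
    rw [this, integral_gaussian, ← Real.sqrt_mul (by positivity)]
    rw [show π / (w₁ / 2) * (w₁ / (2 * π)) = 1 by field_simp, Real.sqrt_one]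
  -- integrability facts
  have hI1 : Integrable (fun x : ℝ => f x * g x) := by
    have := hint w₁ hw₁
    convert this using 2 with x
    rfl
    simp only [hg]; ring
  -- change of variables in the w₂ integral
  have key : (∫ x : ℝ, f x * Real.exp (-w₂ * x ^ 2 / 2) * Real.sqrt (w₂ / (2 * π)))
      = ∫ y : ℝ, f (c * y) * g y := by
    have := MeasureTheory.Measure.integral_comp_mul_left
      (fun x : ℝ => f x * Real.exp (-w₂ * x ^ 2 / 2) * Real.sqrt (w₂ / (2 * π))) c
    rw [abs_of_pos (inv_pos.2 hc0), smul_eq_mul] at this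
    rw [← inv_mul_eq_iff_eq_mul₀ (ne_of_gt (inv_pos.2 hc0))] at this
    rw [inv_inv] at this
    rw [← this, ← integral_const_mul]
    congr 1; funext y
    have h1 : -w₂ * (c * y) ^ 2 / 2 = -w₁ * y ^ 2 / 2 := by
      rw [← hcsq]; ring
    have h2 : c * Real.sqrt (w₂ / (2 * π)) = Real.sqrt (w₁ / (2 * π)) := by
      rw [hc, ← Real.sqrt_mul (le_of_lt (div_pos hw₁ hw₂))]
      congr 1; field_simp
    rw [h1, hg]
    simp only
    rw [← h2]; ring
  rw [key]
  -- integrability of y ↦ f (c*y) * g y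
  have hIc : Integrable (fun y : ℝ => f (c * y) * g y) := by
    have h2 : Integrable (fun y : ℝ => f (c * y) * Real.exp (-w₂ * (c*y) ^ 2 / 2) * Real.sqrt (w₂ / (2 * π))) := by
      exact (MeasureTheory.integrable_comp_mul_left_iff
        (fun x : ℝ => f x * Real.exp (-w₂ * x ^ 2 / 2) * Real.sqrt (w₂ / (2 * π))) (ne_of_gt hc0)).2 (hint w₂ hw₂)
    have := h2.const_mul c
    convert this using 2 with y
    have h1 : -w₂ * (c * y) ^ 2 / 2 = -w₁ * y ^ 2 / 2 := by rw [← hcsq]; ring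
    have h2' : c * Real.sqrt (w₂ / (2 * π)) = Real.sqrt (w₁ / (2 * π)) := by
      rw [hc, ← Real.sqrt_mul (le_of_lt (div_pos hw₁ hw₂))]
      congr 1; field_simp
    rw [hg]; simp only
    rw [h1, ← h2']; ring
  -- Jensen-type symmetry: f 0 ≤ ∫ f * g
  have hneg : Integrable (fun y : ℝ => f (-y) * g y) := by
    have : Integrable (fun y : ℝ => f (-y) * g (-y)) := hI1.comp_neg
    convert this using 2 with y
    rw [hg]; simp only [neg_sq]
  have hintneg : ∫ y : ℝ, f (-y) * g y = ∫ y : ℝ, f y * g y := by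
    calc ∫ y : ℝ, f (-y) * g y = ∫ y : ℝ, f (-y) * g (-y) := by
          congr 1; funext y; rw [hg]; simp only [neg_sq]
      _ = ∫ y : ℝ, f y * g y := integral_neg_eq_self (fun y => f y * g y) volume
  have hf0 : f 0 ≤ ∫ y : ℝ, f y * g y := by
    have hpt : ∀ y : ℝ, f 0 * g y ≤ (f y + f (-y)) / 2 * g y := by
      intro y
      apply mul_le_mul_of_nonneg_right _ (hg0 y)
      have := hf.2 (Set.mem_univ y) (Set.mem_univ (-y))
        (by norm_num : (0:ℝ) ≤ (1:ℝ)/2) (by norm_num : (0:ℝ) ≤ (1:ℝ)/2) (by norm_num)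
      simp only [smul_eq_mul] at this
      calc f 0 = f ((1:ℝ)/2 * y + (1:ℝ)/2 * (-y)) := by ring_nf
        _ ≤ (1:ℝ)/2 * f y + (1:ℝ)/2 * f (-y) := this
        _ = (f y + f (-y)) / 2 := by ring
    have hle : ∫ y : ℝ, f 0 * g y ≤ ∫ y : ℝ, (f y + f (-y)) / 2 * g y := by
      apply integral_mono (hgint.const_mul _) _ hpt
      have : Integrable (fun y : ℝ => (f y * g y + f (-y) * g y) / 2) := (hI1.add hneg).div_const 2
      convert this using 2 with y; ring
    rw [integral_const_mul, hgnorm, mul_one] at hle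
    calc f 0 ≤ ∫ y : ℝ, (f y + f (-y)) / 2 * g y := hle
      _ = (∫ y : ℝ, f y * g y + f (-y) * g y) / 2 := by
          rw [← integral_div]; congr 1; funext y; ring
      _ = ∫ y : ℝ, f y * g y := by
          rw [integral_add hI1 hneg, hintneg]; ring
  -- pointwise convexity bound
  have hpt2 : ∀ y : ℝ, f (c * y) * g y ≤ (c * f y + (1 - c) * f 0) * g y := by
    intro y
    apply mul_le_mul_of_nonneg_right _ (hg0 y)
    have := hf.2 (Set.mem_univ y) (Set.mem_univ (0:ℝ)) hc0.le
      (show (0:ℝ) ≤ 1 - c by linarith) (show c + (1 - c) = 1 by ring)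
    simp only [smul_eq_mul, mul_zero, add_zero] at this
    exact this
  calc ∫ y : ℝ, f (c * y) * g y ≤ ∫ y : ℝ, (c * f y + (1 - c) * f 0) * g y := by
        apply integral_mono hIc _ hpt2
        have : Integrable (fun y : ℝ => c * (f y * g y) + (1 - c) * f 0 * g y) :=
          (hI1.const_mul c).add (hgint.const_mul _)
        convert this using 2 with y; ring
    _ = c * (∫ y : ℝ, f y * g y) + (1 - c) * f 0 := by
        have : (fun y : ℝ => (c * f y + (1 - c) * f 0) * g y)
            = fun y : ℝ => c * (f y * g y) + (1 - c) * f 0 * g y := by funext y; ring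
        rw [this, integral_add (hI1.const_mul c) (hgint.const_mul _),
          integral_const_mul, integral_const_mul, hgnorm, mul_one]
    _ ≤ c * (∫ y : ℝ, f y * g y) + (1 - c) * (∫ y : ℝ, f y * g y) := by
        have h1c : 0 ≤ 1 - c := by linarith
        nlinarith [mul_le_mul_of_nonneg_left hf0 h1c]
    _ = ∫ y : ℝ, f y * g y := by ring
    _ = ∫ x : ℝ, f x * Real.exp (-w₁ * x ^ 2 / 2) * Real.sqrt (w₁ / (2 * π)) := by
        congr 1; funext x; simp only [hg]; ring
end

section
/- Rerooting formula: let V = {1,…,N,δ}, W_{ij} > 0 symmetric, and for a pinning vertex i₀ ∈ V define the measure dν_{i₀}(t) = 1_{t_{i₀}=0} · exp(-½ ∑_{i,j∈V} W_{ij}(cosh(t_i - t_j) - 1)) · √(𝒟_W(t)) · ∏_{i∈V, i≠i₀} e^{-t_i} dt_i / √(2π). Then for any b ∈ V, under the change of variables t'_i = t_i - t_b for all i ∈ V, one has the identity of measures e^{t_b - t_δ} dν_δ(t) = dν_b(t'). -/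
open scoped Classical
open MeasureTheory Real

/-- The spanning-tree polynomial `𝒟_W(t)` over spanning trees of the complete graph on
`Fin (N+1)`; the edge weight is symmetrized, agreeing with `W_{ij} e^{t_i+t_j}` for symmetric `W`. -/
noncomputable def treeSum (N : ℕ) (W : Fin (N + 1) → Fin (N + 1) → ℝ)
    (t : Fin (N + 1) → ℝ) : ℝ :=
  ∑ G ∈ Finset.univ.filter (fun G : SimpleGraph (Fin (N + 1)) => G.IsTree),
    ∏ e ∈ G.edgeFinset,
      Sym2.lift ⟨fun i j => (W i j + W j i) / 2 * Real.exp (t i + t j),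
        fun i j => by dsimp only; rw [add_comm (W j i) (W i j), add_comm (t j) (t i)]⟩ e

/-- Extension of a field defined away from the pinning vertex `i₀` by `0` at `i₀`. -/
noncomputable def extendAt (N : ℕ) (i0 : Fin (N + 1))
    (ρ : {i : Fin (N + 1) // i ≠ i0} → ℝ) : Fin (N + 1) → ℝ :=
  fun i => if h : i = i0 then 0 else ρ ⟨i, h⟩

/-- The effective `t`-field measure `ν_{i₀}` of the `H^{2|2}` model pinned at `i₀`:
the pushforward to fields on all of `V` (with value `0` at `i₀`) of the measure with
density `e^{-½∑ W_{ij}(cosh(t_i-t_j)-1)} √(𝒟_W(t)) ∏_{i≠i₀} e^{-t_i}/√(2π)` with respect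
to Lebesgue measure on the coordinates away from `i₀`. -/
noncomputable def nuPinned (N : ℕ) (W : Fin (N + 1) → Fin (N + 1) → ℝ)
    (i0 : Fin (N + 1)) : Measure (Fin (N + 1) → ℝ) :=
  Measure.map (extendAt N i0)
    (MeasureTheory.volume.withDensity fun ρ => ENNReal.ofReal
      (Real.exp (-(1 / 2) * ∑ i, ∑ j,
          W i j * (Real.cosh (extendAt N i0 ρ i - extendAt N i0 ρ j) - 1)) *
        Real.sqrt (treeSum N W (extendAt N i0 ρ)) *
        ∏ i : {i : Fin (N + 1) // i ≠ i0}, (Real.exp (-ρ i) / Real.sqrt (2 * π))))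

/-! ### Auxiliary lemmas -/

section Aux

open scoped ENNReal

/-- Pulling a density through a pushforward. -/
lemma map_withDensity_aux {α β : Type*} [MeasurableSpace α] [MeasurableSpace β] (μ : Measure α)
    {f : α → β} (hf : Measurable f) {g : β → ℝ≥0∞} (hg : Measurable g) :
    (μ.map f).withDensity g = (μ.withDensity (g ∘ f)).map f := by
  ext s hs
  rw [withDensity_apply _ hs, Measure.map_apply hf hs,
    withDensity_apply _ (hf hs), setLIntegral_map hs hg hf]
  rfl

/-- Scaling of the spanning-tree polynomial under a global shift. -/
lemma treeSum_shift (N : ℕ) (W : Fin (N + 1) → Fin (N + 1) → ℝ) (t : Fin (N + 1) → ℝ) (c : ℝ) :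
    treeSum N W (fun i => t i - c) = Real.exp (-(2 * N * c)) * treeSum N W t := by
  unfold treeSum
  rw [Finset.mul_sum]
  refine Finset.sum_congr rfl (fun G hG => ?_)
  have hT : G.IsTree := (Finset.mem_filter.mp hG).2
  have hcard : G.edgeFinset.card = N := by
    have := hT.card_edgeFinset
    simpa using this
  have step : ∀ e ∈ G.edgeFinset,
      Sym2.lift ⟨fun i j => (W i j + W j i) / 2 * Real.exp ((t i - c) + (t j - c)),
        fun i j => by dsimp only; rw [add_comm (W j i) (W i j), add_comm (t j - c)]⟩ e
      = Real.exp (-(2 * c)) *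
        Sym2.lift ⟨fun i j => (W i j + W j i) / 2 * Real.exp (t i + t j),
        fun i j => by dsimp only; rw [add_comm (W j i) (W i j), add_comm (t j)]⟩ e := by
    intro e _
    induction e with
    | _ i j =>
      simp only [Sym2.lift_mk]
      rw [show t i - c + (t j - c) = -(2 * c) + (t i + t j) by ring, Real.exp_add]
      ring
  rw [Finset.prod_congr rfl step, Finset.prod_mul_distrib, Finset.prod_const, hcard,
    ← Real.exp_nat_mul]
  congr 2
  ring

/-- The shift-and-negate involution on the coordinates away from `δ`. -/
noncomputable def Smap (N : ℕ) (b : Fin (N + 1)) (hb : b ≠ Fin.last N) :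
    ({i : Fin (N + 1) // i ≠ Fin.last N} → ℝ) →ₗ[ℝ] ({i : Fin (N + 1) // i ≠ Fin.last N} → ℝ) where
  toFun ρ := fun i => (if (i : Fin (N + 1)) = b then 0 else ρ i) - ρ ⟨b, hb⟩
  map_add' ρ σ := by
    funext i; by_cases h : (i : Fin (N + 1)) = b <;> simp [h] <;> ring
  map_smul' c ρ := by
    funext i; by_cases h : (i : Fin (N + 1)) = b <;> simp [h] <;> ring

lemma Smap_invol (N : ℕ) (b : Fin (N + 1)) (hb : b ≠ Fin.last N) (ρ) :
    Smap N b hb (Smap N b hb ρ) = ρ := by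
  funext i
  by_cases h : (i : Fin (N + 1)) = b
  · have : i = ⟨b, hb⟩ := Subtype.ext h
    subst this
    simp [Smap]
  · simp [Smap, h]

lemma Smap_measurePreserving (N : ℕ) (b : Fin (N + 1)) (hb : b ≠ Fin.last N) :
    MeasurePreserving (Smap N b hb) volume volume := by
  have hd : (Smap N b hb).det * (Smap N b hb).det = 1 := by
    rw [← LinearMap.det_comp]
    have : (Smap N b hb).comp (Smap N b hb) = LinearMap.id := by
      apply LinearMap.ext; intro ρ; exact Smap_invol N b hb ρ
    rw [this, LinearMap.det_id]
  have habs : |(Smap N b hb).det| = 1 := by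
    rcases mul_self_eq_one_iff.mp hd with h | h <;> simp [h]
  have hdet : (Smap N b hb).det ≠ 0 := by
    intro h; rw [h] at habs; simp at habs
  refine ⟨(Smap N b hb).continuous_of_finiteDimensional.measurable, ?_⟩
  rw [Real.map_linearMap_volume_pi_eq_smul_volume_pi hdet, abs_inv, habs]
  simp

/-- The reindexing bijection exchanging `b` and `δ`. -/
noncomputable def reindexEquiv (N : ℕ) (b : Fin (N + 1)) (hb : b ≠ Fin.last N) :
    {i : Fin (N + 1) // i ≠ Fin.last N} ≃ {i : Fin (N + 1) // i ≠ b} where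
  toFun i := if h : (i : Fin (N + 1)) = b then ⟨Fin.last N, Ne.symm hb⟩ else ⟨i, h⟩
  invFun j := if h : (j : Fin (N + 1)) = Fin.last N then ⟨b, hb⟩ else ⟨j, h⟩
  left_inv i := by
    by_cases h : (i : Fin (N + 1)) = b
    · simp only [h, dif_pos]
      exact Subtype.ext h.symm
    · simp only [h, dif_neg, not_false_iff]
      rw [dif_neg i.2]
  right_inv j := by
    by_cases h : (j : Fin (N + 1)) = Fin.last N
    · simp only [h, dif_pos]
      exact Subtype.ext h.symm
    · simp only [h, dif_neg, not_false_iff]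
      rw [dif_neg j.2]

lemma measurable_extendAt (N : ℕ) (i0 : Fin (N + 1)) : Measurable (extendAt N i0) := by
  apply measurable_pi_lambda
  intro i
  unfold extendAt
  by_cases h : i = i0
  · simp only [h, dif_pos]; exact measurable_const
  · simp only [h, dif_neg, not_false_iff]
    exact measurable_pi_apply _

lemma measurable_treeSum (N : ℕ) (W : Fin (N + 1) → Fin (N + 1) → ℝ) :
    Measurable (fun t => treeSum N W t) := by
  unfold treeSum
  refine Finset.measurable_sum _ (fun G _ => ?_)
  refine Finset.measurable_prod _ (fun e _ => ?_)
  induction e with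
  | _ i j =>
    simp only [Sym2.lift_mk]
    exact measurable_const.mul (((measurable_pi_apply i).add (measurable_pi_apply j)).exp)

lemma measurable_dens (N : ℕ) (W : Fin (N + 1) → Fin (N + 1) → ℝ) (i0 : Fin (N + 1)) :
    Measurable (fun ρ : {i : Fin (N + 1) // i ≠ i0} → ℝ => ENNReal.ofReal
      (Real.exp (-(1 / 2) * ∑ i, ∑ j,
          W i j * (Real.cosh (extendAt N i0 ρ i - extendAt N i0 ρ j) - 1)) *
        Real.sqrt (treeSum N W (extendAt N i0 ρ)) *
        ∏ i : {i : Fin (N + 1) // i ≠ i0}, (Real.exp (-ρ i) / Real.sqrt (2 * π)))) := by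
  apply Measurable.ennreal_ofReal
  refine Measurable.mul (Measurable.mul ?_ ?_) ?_
  · apply Measurable.exp
    apply Measurable.const_mul
    refine Finset.measurable_sum _ (fun i _ => ?_)
    refine Finset.measurable_sum _ (fun j _ => ?_)
    apply Measurable.const_mul
    apply Measurable.sub _ measurable_const
    exact Real.continuous_cosh.measurable.comp
      (((measurable_pi_apply i).comp (measurable_extendAt N i0)).sub
        ((measurable_pi_apply j).comp (measurable_extendAt N i0)))
  · exact Real.continuous_sqrt.measurable.comp
      ((measurable_treeSum N W).comp (measurable_extendAt N i0))
  · refine Finset.measurable_prod _ (fun i _ => ?_)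
    exact ((measurable_pi_apply i).neg.exp).div measurable_const

/-- Product of exponential single-site factors over the coordinates away from `i0`. -/
lemma prod_exp_aux (N : ℕ) (i0 : Fin (N + 1)) (u : Fin (N + 1) → ℝ) :
    ∏ i : {i : Fin (N + 1) // i ≠ i0}, (Real.exp (-(u i)) / Real.sqrt (2 * π))
      = Real.exp (u i0 - ∑ i, u i) / (Real.sqrt (2 * π)) ^ N := by
  have hcard : Fintype.card {i : Fin (N + 1) // i ≠ i0} = N := by
    simp [Fintype.card_subtype_compl]
  rw [Finset.prod_div_distrib, Finset.prod_const, ← Real.exp_sum,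
    Finset.card_univ, hcard]
  congr 1
  have hsum : ∑ i : {i : Fin (N + 1) // i ≠ i0}, u i
      = ∑ i ∈ Finset.univ.erase i0, u i :=
    (Finset.sum_subtype (Finset.univ.erase i0) (fun x => by simp) u).symm
  rw [show (∑ x : {i : Fin (N + 1) // i ≠ i0}, -u ↑x)
      = -(∑ x : {i : Fin (N + 1) // i ≠ i0}, u ↑x) from by rw [Finset.sum_neg_distrib],
    hsum, Finset.sum_erase_eq_sub (Finset.mem_univ i0)]
  ring_nf

lemma map_withDensity_inv {α β : Type*} [MeasurableSpace α] [MeasurableSpace β]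
    (μ : Measure α) {f : α → β} {finv : β → α} (hf : Measurable f) (hfinv : Measurable finv)
    (hinv : ∀ x, finv (f x) = x) {F : α → ℝ≥0∞} (hF : Measurable F) :
    Measure.map f (μ.withDensity F) = (Measure.map f μ).withDensity (F ∘ finv) := by
  have hFm : Measurable (F ∘ finv) := hF.comp hfinv
  rw [map_withDensity_aux μ hf hFm]
  have hFe : F = (F ∘ finv) ∘ f := funext fun x => by simp [Function.comp_apply, hinv]
  exact congrArg (Measure.map f) (congrArg μ.withDensity hFe)

end Aux

set_option maxHeartbeats 1000000 in
/-- Rerooting formula: pushing forward `e^{t_b - t_δ} dν_δ(t)` under the shift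
`t'_i = t_i - t_b` yields `ν_b`. Here `δ = Fin.last N`. -/
theorem rerooting_formula (N : ℕ) (W : Fin (N + 1) → Fin (N + 1) → ℝ)
    (hWsym : ∀ i j, W i j = W j i) (hWpos : ∀ i j, 0 < W i j) (b : Fin (N + 1)) :
    Measure.map (fun t : Fin (N + 1) → ℝ => fun i => t i - t b)
      ((nuPinned N W (Fin.last N)).withDensity fun t =>
        ENNReal.ofReal (Real.exp (t b - t (Fin.last N)))) =
      nuPinned N W b := by
  have hshift : Measurable (fun t : Fin (N + 1) → ℝ => fun i => t i - t b) :=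
    measurable_pi_lambda _ (fun i => (measurable_pi_apply i).sub (measurable_pi_apply b))
  by_cases hb : b = Fin.last N
  · subst hb
    have h1 : (fun t : Fin (N + 1) → ℝ =>
        ENNReal.ofReal (Real.exp (t (Fin.last N) - t (Fin.last N)))) = (1 : (Fin (N + 1) → ℝ) → ENNReal) := by
      funext t; simp
    rw [h1, withDensity_one]
    unfold nuPinned
    rw [Measure.map_map hshift (measurable_extendAt N (Fin.last N))]
    congr 1
    funext ρ
    funext i
    simp [Function.comp, extendAt]
  · -- main case
    have hSmeas : Measurable (Smap N b hb) := (Smap_measurePreserving N b hb).measurable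
    set P := MeasurableEquiv.piCongrLeft (fun _ : {i : Fin (N + 1) // i ≠ b} => ℝ)
      (reindexEquiv N b hb) with hPdef
    have hg : Measurable (fun t : Fin (N + 1) → ℝ =>
        ENNReal.ofReal (Real.exp (t b - t (Fin.last N)))) :=
      (((measurable_pi_apply b).sub (measurable_pi_apply (Fin.last N))).exp).ennreal_ofReal
    have hcomp : ((fun t : Fin (N + 1) → ℝ => fun i => t i - t b) ∘ extendAt N (Fin.last N))
        = (extendAt N b) ∘ (⇑P ∘ ⇑(Smap N b hb)) := by
      funext ρ
      funext i
      simp only [Function.comp_apply]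
      by_cases h : i = b
      · subst h
        simp [extendAt, hb]
      · rw [show extendAt N b (P (Smap N b hb ρ)) i = (P (Smap N b hb ρ)) ⟨i, h⟩ from by
          simp [extendAt, h]]
        by_cases h2 : i = Fin.last N
        · subst h2
          rw [show (⟨Fin.last N, h⟩ : {i : Fin (N + 1) // i ≠ b})
              = reindexEquiv N b hb ⟨b, hb⟩ from by simp [reindexEquiv]]
          rw [MeasurableEquiv.piCongrLeft_apply_apply]
          simp [Smap, extendAt, hb]
        · rw [show (⟨i, h⟩ : {i : Fin (N + 1) // i ≠ b})
              = reindexEquiv N b hb ⟨i, h2⟩ from by simp [reindexEquiv, h]]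
          rw [MeasurableEquiv.piCongrLeft_apply_apply]
          simp [Smap, extendAt, h, h2, hb]
    unfold nuPinned
    rw [map_withDensity_aux _ (measurable_extendAt N (Fin.last N)) hg]
    rw [Measure.map_map hshift (measurable_extendAt N (Fin.last N))]
    rw [← withDensity_mul _ (measurable_dens N W (Fin.last N))
      (hg.comp (measurable_extendAt N (Fin.last N)))]
    rw [hcomp]
    rw [← Measure.map_map (measurable_extendAt N b) (P.measurable.comp hSmeas)]
    rw [← Measure.map_map P.measurable hSmeas]
    have hFmeas : Measurable ((fun ρ : {i : Fin (N + 1) // i ≠ Fin.last N} → ℝ =>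
        ENNReal.ofReal
          (Real.exp (-(1 / 2) * ∑ i, ∑ j, W i j *
              (Real.cosh (extendAt N (Fin.last N) ρ i - extendAt N (Fin.last N) ρ j) - 1)) *
            Real.sqrt (treeSum N W (extendAt N (Fin.last N) ρ)) *
            ∏ i : {i : Fin (N + 1) // i ≠ Fin.last N},
              (Real.exp (-ρ i) / Real.sqrt (2 * π)))) *
        ((fun t => ENNReal.ofReal (Real.exp (t b - t (Fin.last N)))) ∘
          extendAt N (Fin.last N))) :=
      (measurable_dens N W (Fin.last N)).mul (hg.comp (measurable_extendAt N (Fin.last N)))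
    rw [map_withDensity_inv _ hSmeas hSmeas (Smap_invol N b hb) hFmeas,
      (Smap_measurePreserving N b hb).map_eq]
    rw [map_withDensity_inv _ P.measurable P.symm.measurable
      (fun x => P.symm_apply_apply x) (hFmeas.comp hSmeas),
      (MeasureTheory.volume_measurePreserving_piCongrLeft _ _).map_eq]
    refine congrArg (Measure.map (extendAt N b)) (congrArg
      (Measure.withDensity (volume : Measure ({i : Fin (N + 1) // i ≠ b} → ℝ)))
      (funext fun σ => ?_))
    set ρ := Smap N b hb (P.symm σ) with hρ
    have hσ : P (Smap N b hb ρ) = σ := by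
      rw [hρ, Smap_invol, MeasurableEquiv.apply_symm_apply]
    simp only [Function.comp_apply, Pi.mul_apply]
    rw [← hσ]
    simp only [MeasurableEquiv.symm_apply_apply]
    rw [Smap_invol]
    have hkey := congrFun hcomp ρ
    simp only [Function.comp_apply] at hkey
    replace hkey : extendAt N b (P (Smap N b hb ρ))
        = fun i => extendAt N (Fin.last N) ρ i - extendAt N (Fin.last N) ρ b := hkey.symm
    set t := extendAt N (Fin.last N) ρ with ht
    have htδ : t (Fin.last N) = 0 := by simp [ht, extendAt]
    have hρt : ∀ i : {i : Fin (N + 1) // i ≠ Fin.last N}, ρ i = t ↑i := by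
      intro i; simp [ht, extendAt, i.2]
    have hPt : ∀ i : {i : Fin (N + 1) // i ≠ b}, (P (Smap N b hb ρ)) i = t ↑i - t b := by
      intro i
      have h1 : (P (Smap N b hb ρ)) i = extendAt N b (P (Smap N b hb ρ)) ↑i := by
        simp [extendAt, i.2]
      rw [h1, hkey]
    have hcosh : ∑ i, ∑ j, W i j * (Real.cosh (extendAt N b (P (Smap N b hb ρ)) i
          - extendAt N b (P (Smap N b hb ρ)) j) - 1)
        = ∑ i, ∑ j, W i j * (Real.cosh (t i - t j) - 1) := by
      refine Finset.sum_congr rfl fun i _ => Finset.sum_congr rfl fun j _ => ?_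
      rw [hkey]
      dsimp only
      rw [sub_sub_sub_cancel_right]
    have htree : Real.sqrt (treeSum N W (extendAt N b (P (Smap N b hb ρ))))
        = Real.exp (-(2 * N * t b) / 2) * Real.sqrt (treeSum N W t) := by
      rw [hkey, treeSum_shift, Real.sqrt_mul (Real.exp_nonneg _), ← Real.exp_half]
    have hprodb : (∏ i : {i : Fin (N + 1) // i ≠ b},
          (Real.exp (-(P (Smap N b hb ρ)) i) / Real.sqrt (2 * π)))
        = Real.exp ((t b - t b) - ∑ i, (t i - t b)) / Real.sqrt (2 * π) ^ N := by
      have hstep : ∀ i : {i : Fin (N + 1) // i ≠ b},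
          Real.exp (-(P (Smap N b hb ρ)) i) / Real.sqrt (2 * π)
          = Real.exp (-((fun j => t j - t b) ↑i)) / Real.sqrt (2 * π) := fun i => by
        rw [hPt i]
      rw [Finset.prod_congr rfl (fun i _ => hstep i)]
      exact prod_exp_aux N b (fun j => t j - t b)
    have hprodδ : (∏ i : {i : Fin (N + 1) // i ≠ Fin.last N},
          (Real.exp (-ρ i) / Real.sqrt (2 * π)))
        = Real.exp (t (Fin.last N) - ∑ i, t i) / Real.sqrt (2 * π) ^ N := by
      have hstep : ∀ i : {i : Fin (N + 1) // i ≠ Fin.last N},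
          Real.exp (-ρ i) / Real.sqrt (2 * π)
          = Real.exp (-(t ↑i)) / Real.sqrt (2 * π) := fun i => by rw [hρt i]
      rw [Finset.prod_congr rfl (fun i _ => hstep i)]
      exact prod_exp_aux N (Fin.last N) t
    rw [hcosh, htree, hprodb, hprodδ, htδ]
    rw [← ENNReal.ofReal_mul (by positivity)]
    congr 1
    rw [Finset.sum_sub_distrib, Finset.sum_const, Finset.card_univ, Fintype.card_fin,
      nsmul_eq_mul]
    have hx : Real.exp (-(2 * N * t b) / 2)
          * Real.exp ((t b - t b) - (∑ i, t i - ((N + 1 : ℕ) : ℝ) * t b))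
        = Real.exp (0 - ∑ i, t i) * Real.exp (t b - 0) := by
      rw [← Real.exp_add, ← Real.exp_add]
      congr 1
      push_cast
      ring
    linear_combination -(Real.exp (-(1 / 2) * ∑ i, ∑ j, W i j * (Real.cosh (t i - t j) - 1))
      * Real.sqrt (treeSum N W t) / Real.sqrt (2 * π) ^ N) * hx
end

section
/- One-point H^{2|2} monotonicity: for W > 0 and any convex function f : ℝ → ℝ (with suitable integrability), the quantity K(W) = ∫_ℝ f(e^t) · exp(-W(cosh t - 1)) · √(W·e^t) · e^{-t} dt / √(2π) is non-increasing in W. -/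
open MeasureTheory Real

/-! Auxiliary definitions and lemmas for the one-point `H^{2|2}` monotonicity theorem. -/

/-- The symmetrized two-point weight: the average of `f` at the points `(c+a)²` and `(c-a)²`
(where `c = √(1+a²)`, so the two points multiply to `1`), with weights `(c∓a)/(2c)`,
whose barycenter is exactly `1`. -/
noncomputable def h22Eweight (f : ℝ → ℝ) (a : ℝ) : ℝ :=
  ((Real.sqrt (1 + a ^ 2) - a) * f ((Real.sqrt (1 + a ^ 2) + a) ^ 2)
    + (Real.sqrt (1 + a ^ 2) + a) * f ((Real.sqrt (1 + a ^ 2) - a) ^ 2))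
    / (2 * Real.sqrt (1 + a ^ 2))

/-- The integrand after the change of variables `s = 2√W sinh(t/2)`. -/
noncomputable def h22g (f : ℝ → ℝ) (W s : ℝ) : ℝ :=
  (Real.sqrt (1 + (s / (2 * Real.sqrt W)) ^ 2) - s / (2 * Real.sqrt W))
      / Real.sqrt (1 + (s / (2 * Real.sqrt W)) ^ 2)
    * f ((Real.sqrt (1 + (s / (2 * Real.sqrt W)) ^ 2) + s / (2 * Real.sqrt W)) ^ 2)
    * (Real.exp (-(s ^ 2) / 2) / Real.sqrt (2 * π))

lemma h22_chord {f : ℝ → ℝ} (hf : ConvexOn ℝ Set.univ f) {P Q x : ℝ}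
    (hPx : P ≤ x) (hxQ : x ≤ Q) (hPQ : P < Q) :
    (Q - P) * f x ≤ (Q - x) * f P + (x - P) * f Q := by
  have h0 : (0:ℝ) < Q - P := by linarith
  have ht1 : (0:ℝ) ≤ (Q - x) / (Q - P) := div_nonneg (by linarith) h0.le
  have ht2 : (0:ℝ) ≤ (x - P) / (Q - P) := div_nonneg (by linarith) h0.le
  have hsum : (Q - x) / (Q - P) + (x - P) / (Q - P) = 1 := by field_simp; ring
  have hcvx := hf.2 (Set.mem_univ P) (Set.mem_univ Q) ht1 ht2 hsum
  simp only [smul_eq_mul] at hcvx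
  have hx : (Q - x) / (Q - P) * P + (x - P) / (Q - P) * Q = x := by
    field_simp; ring
  rw [hx] at hcvx
  have := mul_le_mul_of_nonneg_left hcvx h0.le
  calc (Q - P) * f x ≤ (Q - P) * ((Q - x) / (Q - P) * f P + (x - P) / (Q - P) * f Q) := this
    _ = (Q - x) * f P + (x - P) * f Q := by field_simp

lemma h22Eweight_neg (f : ℝ → ℝ) (a : ℝ) : h22Eweight f (-a) = h22Eweight f a := by
  unfold h22Eweight
  simp only [neg_sq, sub_neg_eq_add, ← sub_eq_add_neg]
  ring

set_option maxHeartbeats 1000000 in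
lemma h22Eweight_mono {f : ℝ → ℝ} (hf : ConvexOn ℝ Set.univ f) {b a : ℝ}
    (hb : 0 ≤ b) (hba : b ≤ a) : h22Eweight f b ≤ h22Eweight f a := by
  rcases eq_or_lt_of_le (hb.trans hba) with ha0 | ha0
  · have hb0 : b = 0 := le_antisymm (hba.trans ha0.symm.le) hb
    rw [← ha0, ← hb0]
  set c := Real.sqrt (1 + a ^ 2) with hc_def
  set d := Real.sqrt (1 + b ^ 2) with hd_def
  have hc : c ^ 2 = 1 + a ^ 2 := Real.sq_sqrt (by positivity)
  have hd : d ^ 2 = 1 + b ^ 2 := Real.sq_sqrt (by positivity)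
  have hc1 : 1 ≤ c := by rw [hc_def, Real.one_le_sqrt]; nlinarith
  have hd1 : 1 ≤ d := by rw [hd_def, Real.one_le_sqrt]; nlinarith
  have hdc : d ≤ c := by
    rw [hc_def, hd_def]
    exact Real.sqrt_le_sqrt (by nlinarith)
  have hca : a < c := by nlinarith
  have hdb : b < d := by nlinarith
  -- the four points
  have hq_le_Q : (d + b) ^ 2 ≤ (c + a) ^ 2 := by nlinarith
  have hPQ : ((c - a) * (c + a)) = 1 := by nlinarith
  have hpq : ((d - b) * (d + b)) = 1 := by nlinarith
  have hca' : c - a ≤ d - b := by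
    have e1 : (c - a) * ((d + b) * (c + a)) = d + b := by linear_combination (d + b) * hPQ
    have e2 : (d - b) * ((d + b) * (c + a)) = c + a := by linear_combination (c + a) * hpq
    have h3 : (c - a) * ((d + b) * (c + a)) ≤ (d - b) * ((d + b) * (c + a)) := by
      rw [e1, e2]; linarith
    exact le_of_mul_le_mul_right h3 (by nlinarith)
  have hP_le_p : (c - a) ^ 2 ≤ (d - b) ^ 2 := by nlinarith
  have hp_le_q : (d - b) ^ 2 ≤ (d + b) ^ 2 := by nlinarith
  have hPltQ : (c - a) ^ 2 < (c + a) ^ 2 := by nlinarith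
  have e1 := h22_chord hf (hP_le_p.trans hp_le_q) hq_le_Q hPltQ
  have e2 := h22_chord hf hP_le_p (hp_le_q.trans hq_le_Q) hPltQ
  -- combine the two chord inequalities
  have key : 4 * a * c * ((d - b) * f ((d + b) ^ 2) + (d + b) * f ((d - b) ^ 2))
      ≤ 4 * a * d * ((c + a) * f ((c - a) ^ 2) + (c - a) * f ((c + a) ^ 2)) := by
    have e1' := mul_le_mul_of_nonneg_left e1 (by linarith : (0:ℝ) ≤ d - b)
    have e2' := mul_le_mul_of_nonneg_left e2 (by linarith : (0:ℝ) ≤ d + b)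
    calc 4 * a * c * ((d - b) * f ((d + b) ^ 2) + (d + b) * f ((d - b) ^ 2))
        = (d - b) * (((c + a) ^ 2 - (c - a) ^ 2) * f ((d + b) ^ 2))
          + (d + b) * (((c + a) ^ 2 - (c - a) ^ 2) * f ((d - b) ^ 2)) := by ring
      _ ≤ (d - b) * (((c + a) ^ 2 - (d + b) ^ 2) * f ((c - a) ^ 2)
            + ((d + b) ^ 2 - (c - a) ^ 2) * f ((c + a) ^ 2))
          + (d + b) * (((c + a) ^ 2 - (d - b) ^ 2) * f ((c - a) ^ 2)
            + ((d - b) ^ 2 - (c - a) ^ 2) * f ((c + a) ^ 2)) := add_le_add e1' e2'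
      _ = 4 * a * d * ((c + a) * f ((c - a) ^ 2) + (c - a) * f ((c + a) ^ 2)) := by
          linear_combination (2 * d * (f ((c - a) ^ 2) - f ((c + a) ^ 2))) * hc
            + (2 * d * (f ((c + a) ^ 2) - f ((c - a) ^ 2))) * hd
  -- divide by positive constants
  unfold h22Eweight
  rw [← hc_def, ← hd_def, div_le_div_iff₀ (by positivity) (by positivity)]
  have h2a : (0:ℝ) < 4 * a := by linarith
  refine le_of_mul_le_mul_left ?_ h2a
  nlinarith [key]

lemma h22_sqrt_one_add_sinh_sq (u : ℝ) :
    Real.sqrt (1 + Real.sinh u ^ 2) = Real.cosh u := by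
  rw [show (1:ℝ) + Real.sinh u ^ 2 = Real.cosh u ^ 2 by rw [Real.cosh_sq]; ring,
    Real.sqrt_sq (Real.cosh_pos u).le]

lemma h22_exp_half_sq (t : ℝ) : Real.exp (t / 2) ^ 2 = Real.exp t := by
  rw [sq, ← Real.exp_add]; congr 1; ring

lemma h22_cosh_sub_one (t : ℝ) : Real.cosh t - 1 = 2 * Real.sinh (t / 2) ^ 2 := by
  have h1 : Real.exp (t / 2) * Real.exp (t / 2) = Real.exp t := by
    rw [← Real.exp_add]; congr 1; ring
  have h2 : Real.exp (-(t / 2)) * Real.exp (-(t / 2)) = Real.exp (-t) := by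
    rw [← Real.exp_add]; congr 1; ring
  have h3 : Real.exp (t / 2) * Real.exp (-(t / 2)) = 1 := by
    rw [← Real.exp_add]; simp
  rw [Real.cosh_eq, Real.sinh_eq]
  linear_combination (-(1:ℝ)/2) * h1 - (1/2) * h2 + h3

/-- The pointwise form of the change of variables `s = 2√W sinh(t/2)`. -/
lemma h22_transform (f : ℝ → ℝ) {W : ℝ} (hW : 0 < W) (t : ℝ) :
    |Real.sqrt W * Real.cosh (t / 2)| •
        h22g f W (2 * Real.sqrt W * Real.sinh (t / 2)) =
      f (Real.exp t) * Real.exp (-W * (Real.cosh t - 1)) *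
        Real.sqrt (W * Real.exp t) * Real.exp (-t) / Real.sqrt (2 * π) := by
  have hsW : 0 < Real.sqrt W := Real.sqrt_pos.mpr hW
  have hW2 : Real.sqrt W ^ 2 = W := Real.sq_sqrt hW.le
  have hcosh : 0 < Real.cosh (t / 2) := Real.cosh_pos _
  have ha : 2 * Real.sqrt W * Real.sinh (t / 2) / (2 * Real.sqrt W) = Real.sinh (t / 2) := by
    field_simp
  have hgauss : -((2 * Real.sqrt W * Real.sinh (t / 2)) ^ 2) / 2
      = -W * (Real.cosh t - 1) := by
    have hco := h22_cosh_sub_one t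
    linear_combination (-2 * Real.sinh (t / 2) ^ 2) * hW2 + W * hco
  have hsqrtWe : Real.sqrt (W * Real.exp t) = Real.sqrt W * Real.exp (t / 2) := by
    rw [Real.sqrt_mul hW.le, show Real.exp t = Real.exp (t / 2) ^ 2 from (h22_exp_half_sq t).symm,
      Real.sqrt_sq (Real.exp_nonneg _)]
  have hexp : Real.exp (-(t / 2)) = Real.exp (t / 2) * Real.exp (-t) := by
    rw [← Real.exp_add]; congr 1; ring
  unfold h22g
  rw [ha, h22_sqrt_one_add_sinh_sq, Real.cosh_add_sinh, Real.cosh_sub_sinh, hgauss,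
    h22_exp_half_sq, hsqrtWe, hexp,
    abs_of_pos (by positivity : (0:ℝ) < Real.sqrt W * Real.cosh (t / 2))]
  rw [smul_eq_mul]
  field_simp

/-- `h22g` sums with its reflection to twice the `Eweight` times the Gaussian factor. -/
lemma h22g_add_neg (f : ℝ → ℝ) {W : ℝ} (hW : 0 < W) (s : ℝ) :
    h22g f W s + h22g f W (-s)
      = 2 * h22Eweight f (s / (2 * Real.sqrt W)) *
          (Real.exp (-(s ^ 2) / 2) / Real.sqrt (2 * π)) := by
  have hc : 0 < Real.sqrt (1 + (s / (2 * Real.sqrt W)) ^ 2) := Real.sqrt_pos.mpr (by positivity)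
  unfold h22g h22Eweight
  rw [show -s / (2 * Real.sqrt W) = -(s / (2 * Real.sqrt W)) from by ring]
  simp only [neg_sq, sub_neg_eq_add, ← sub_eq_add_neg]
  field_simp

/-- One-point `H^{2|2}` monotonicity: for convex `f`, the quantity
`K(W) = ∫ f(e^t) e^{-W(cosh t - 1)} √(W e^t) e^{-t} dt/√(2π)` is non-increasing in `W > 0`. -/
theorem onePoint_H22_monotone (f : ℝ → ℝ) (hf : ConvexOn ℝ Set.univ f)
    (hint : ∀ W : ℝ, 0 < W →
      Integrable (fun t : ℝ =>
        f (Real.exp t) * Real.exp (-W * (Real.cosh t - 1)) *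
          Real.sqrt (W * Real.exp t) * Real.exp (-t) / Real.sqrt (2 * π)))
    (W₁ W₂ : ℝ) (hW₁ : 0 < W₁) (h12 : W₁ ≤ W₂) :
    ∫ t : ℝ, f (Real.exp t) * Real.exp (-W₂ * (Real.cosh t - 1)) *
        Real.sqrt (W₂ * Real.exp t) * Real.exp (-t) / Real.sqrt (2 * π) ≤
      ∫ t : ℝ, f (Real.exp t) * Real.exp (-W₁ * (Real.cosh t - 1)) *
        Real.sqrt (W₁ * Real.exp t) * Real.exp (-t) / Real.sqrt (2 * π) := by
  have hW₂ : 0 < W₂ := lt_of_lt_of_le hW₁ h12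
  -- change of variables data, for each W > 0
  have hderiv : ∀ W : ℝ, 0 < W → ∀ t ∈ Set.univ,
      HasDerivWithinAt (fun t : ℝ => 2 * Real.sqrt W * Real.sinh (t / 2))
        (Real.sqrt W * Real.cosh (t / 2)) Set.univ t := by
    intro W hW t _
    have h1 : HasDerivAt (fun t : ℝ => t / 2) (1 / 2) t := by
      simpa using (hasDerivAt_id t).div_const 2
    have h2 : HasDerivAt (fun t : ℝ => Real.sinh (t / 2)) (Real.cosh (t / 2) * (1 / 2)) t :=
      by have := (Real.hasDerivAt_sinh (t / 2)).comp t h1; exact this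
    have h3 := h2.const_mul (2 * Real.sqrt W)
    have : 2 * Real.sqrt W * (Real.cosh (t / 2) * (1 / 2)) = Real.sqrt W * Real.cosh (t / 2) := by
      ring
    rw [this] at h3
    exact h3.hasDerivWithinAt
  have hinj : ∀ W : ℝ, 0 < W →
      Set.InjOn (fun t : ℝ => 2 * Real.sqrt W * Real.sinh (t / 2)) Set.univ := by
    intro W hW
    have hsW : 0 < Real.sqrt W := Real.sqrt_pos.mpr hW
    have hmono : StrictMono (fun t : ℝ => 2 * Real.sqrt W * Real.sinh (t / 2)) := by
      intro x y hxy
      have := Real.sinh_strictMono (show x / 2 < y / 2 by linarith)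
      have h2 : (0:ℝ) < 2 * Real.sqrt W := by positivity
      exact mul_lt_mul_of_pos_left this h2
    exact hmono.injective.injOn
  have himg : ∀ W : ℝ, 0 < W →
      (fun t : ℝ => 2 * Real.sqrt W * Real.sinh (t / 2)) '' Set.univ = Set.univ := by
    intro W hW
    have hsW : 0 < Real.sqrt W := Real.sqrt_pos.mpr hW
    apply Set.eq_univ_of_forall
    intro s
    refine ⟨2 * Real.arsinh (s / (2 * Real.sqrt W)), Set.mem_univ _, ?_⟩
    have : (2 : ℝ) * Real.arsinh (s / (2 * Real.sqrt W)) / 2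
        = Real.arsinh (s / (2 * Real.sqrt W)) := by ring
    simp only [this, Real.sinh_arsinh]
    field_simp
  -- change of variables: the t-integral equals the s-integral of h22g
  have change : ∀ W : ℝ, 0 < W →
      (∫ t : ℝ, f (Real.exp t) * Real.exp (-W * (Real.cosh t - 1)) *
          Real.sqrt (W * Real.exp t) * Real.exp (-t) / Real.sqrt (2 * π))
        = ∫ s : ℝ, h22g f W s := by
    intro W hW
    have h := integral_image_eq_integral_abs_deriv_smul MeasurableSet.univ
      (hderiv W hW) (hinj W hW) (h22g f W)
    rw [himg W hW] at h
    simp only [Measure.restrict_univ] at h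
    rw [h]
    exact integral_congr_ae (Filter.Eventually.of_forall fun t => (h22_transform f hW t).symm)
  -- integrability of h22g
  have hgint : ∀ W : ℝ, 0 < W → Integrable (h22g f W) := by
    intro W hW
    have h := integrableOn_image_iff_integrableOn_abs_deriv_smul MeasurableSet.univ
      (hderiv W hW) (hinj W hW) (h22g f W)
    rw [himg W hW, integrableOn_univ, integrableOn_univ] at h
    apply h.mpr
    apply (hint W hW).congr
    filter_upwards with t
    exact (h22_transform f hW t).symm
  have hgnegint : ∀ W : ℝ, 0 < W → Integrable (fun s : ℝ => h22g f W (-s)) := by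
    intro W hW
    exact (hgint W hW).comp_neg
  -- symmetrization
  have hsym : ∀ W : ℝ, 0 < W →
      (∫ s : ℝ, h22g f W s) = ∫ s : ℝ, (h22g f W s + h22g f W (-s)) / 2 := by
    intro W hW
    rw [integral_div, integral_add (hgint W hW) (hgnegint W hW),
      integral_neg_eq_self (h22g f W) volume]
    ring
  rw [change W₂ hW₂, change W₁ hW₁, hsym W₂ hW₂, hsym W₁ hW₁]
  -- pointwise comparison of the symmetrized integrands
  have hpt : ∀ s : ℝ, (h22g f W₂ s + h22g f W₂ (-s)) / 2
      ≤ (h22g f W₁ s + h22g f W₁ (-s)) / 2 := by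
    intro s
    rw [h22g_add_neg f hW₂ s, h22g_add_neg f hW₁ s]
    have hG : 0 ≤ Real.exp (-(s ^ 2) / 2) / Real.sqrt (2 * π) := by positivity
    have hE : h22Eweight f (s / (2 * Real.sqrt W₂)) ≤ h22Eweight f (s / (2 * Real.sqrt W₁)) := by
      have hsW₁ : 0 < Real.sqrt W₁ := Real.sqrt_pos.mpr hW₁
      have hsW₂ : 0 < Real.sqrt W₂ := Real.sqrt_pos.mpr hW₂
      have hs12 : Real.sqrt W₁ ≤ Real.sqrt W₂ := Real.sqrt_le_sqrt h12
      rcases le_or_gt 0 s with hs | hs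
      · exact h22Eweight_mono hf (by positivity)
          (div_le_div_of_nonneg_left hs (by positivity) (by linarith))
      · rw [← h22Eweight_neg f (s / (2 * Real.sqrt W₂)),
          ← h22Eweight_neg f (s / (2 * Real.sqrt W₁))]
        refine h22Eweight_mono hf ?_ ?_
        · rw [le_neg, neg_zero]
          exact le_of_lt (div_neg_of_neg_of_pos hs (by positivity))
        · rw [neg_le_neg_iff]
          rw [div_le_div_iff₀ (by positivity) (by positivity)]
          nlinarith
    have := mul_le_mul_of_nonneg_right hE hG
    nlinarith [this]
  exact integral_mono (((hgint W₂ hW₂).add (hgnegint W₂ hW₂)).div_const 2)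
    (((hgint W₁ hW₁).add (hgnegint W₁ hW₁)).div_const 2) hpt
end

section
/- The one-point effective H^{2|2} measure is a probability measure: for every W > 0, ∫_ℝ exp(-W(cosh t - 1)) · √(W·e^t) · e^{-t} dt / √(2π) = 1. -/
open MeasureTheory Real

section aux

variable (W : ℝ)

private lemma phi_hasDeriv (t : ℝ) :
    HasDerivAt (fun t : ℝ => 2 * Real.sqrt W * Real.sinh (t / 2))
      (Real.sqrt W * Real.cosh (t / 2)) t := by
  have h := ((Real.hasDerivAt_sinh (t / 2)).comp t ((hasDerivAt_id t).div_const 2)).const_mul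
    (2 * Real.sqrt W)
  exact h.congr_deriv (by ring)

private lemma phi_comp (hW : 0 < W) (t : ℝ) :
    Real.exp (-(1 / 2 : ℝ) * (2 * Real.sqrt W * Real.sinh (t / 2)) ^ 2)
      = Real.exp (-(2 * W) * Real.sinh (t / 2) ^ 2) := by
  congr 1
  have : Real.sqrt W ^ 2 = W := Real.sq_sqrt hW.le
  ring_nf
  nlinarith [this]

/-- The key substituted integral. -/
private lemma integral_J (hW : 0 < W) :
    ∫ t : ℝ, |Real.sqrt W * Real.cosh (t / 2)| •
        Real.exp (-(1 / 2 : ℝ) * (2 * Real.sqrt W * Real.sinh (t / 2)) ^ 2)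
      = Real.sqrt (2 * π) := by
  have hderiv : ∀ t ∈ (Set.univ : Set ℝ),
      HasDerivWithinAt (fun t : ℝ => 2 * Real.sqrt W * Real.sinh (t / 2))
        (Real.sqrt W * Real.cosh (t / 2)) Set.univ t :=
    fun t _ => (phi_hasDeriv W t).hasDerivWithinAt
  have hmono : StrictMono (fun t : ℝ => 2 * Real.sqrt W * Real.sinh (t / 2)) := by
    intro a b hab
    have h2 : (0:ℝ) < 2 * Real.sqrt W := by positivity
    exact mul_lt_mul_of_pos_left (Real.sinh_lt_sinh.2 (by linarith)) h2
  have hinj : Set.InjOn (fun t : ℝ => 2 * Real.sqrt W * Real.sinh (t / 2)) Set.univ :=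
    hmono.injective.injOn
  have hsurj : Function.Surjective (fun t : ℝ => 2 * Real.sqrt W * Real.sinh (t / 2)) := by
    intro y
    refine ⟨2 * Real.arsinh (y / (2 * Real.sqrt W)), ?_⟩
    have h2 : (2 * Real.sqrt W) ≠ 0 := by positivity
    show 2 * Real.sqrt W * Real.sinh (2 * Real.arsinh (y / (2 * Real.sqrt W)) / 2) = y
    rw [mul_div_cancel_left₀ _ (two_ne_zero), Real.sinh_arsinh, mul_div_cancel₀ _ h2]
  have himg : (fun t : ℝ => 2 * Real.sqrt W * Real.sinh (t / 2)) '' Set.univ = Set.univ := by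
    rw [Set.image_univ]; exact hsurj.range_eq
  have key := MeasureTheory.integral_image_eq_integral_abs_deriv_smul MeasurableSet.univ
    hderiv hinj (fun u => Real.exp (-(1 / 2 : ℝ) * u ^ 2))
  rw [himg, MeasureTheory.setIntegral_univ, MeasureTheory.setIntegral_univ] at key
  rw [← key, integral_gaussian, show (π / (1/2 : ℝ)) = 2 * π by ring]

private lemma integrable_J (hW : 0 < W) :
    Integrable (fun t : ℝ =>
      Real.sqrt W * Real.cosh (t / 2) * Real.exp (-(2 * W) * Real.sinh (t / 2) ^ 2)) := by
  have hderiv : ∀ t ∈ (Set.univ : Set ℝ),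
      HasDerivWithinAt (fun t : ℝ => 2 * Real.sqrt W * Real.sinh (t / 2))
        (Real.sqrt W * Real.cosh (t / 2)) Set.univ t :=
    fun t _ => (phi_hasDeriv W t).hasDerivWithinAt
  have hmono : StrictMono (fun t : ℝ => 2 * Real.sqrt W * Real.sinh (t / 2)) := by
    intro a b hab
    have h2 : (0:ℝ) < 2 * Real.sqrt W := by positivity
    exact mul_lt_mul_of_pos_left (Real.sinh_lt_sinh.2 (by linarith)) h2
  have hinj : Set.InjOn (fun t : ℝ => 2 * Real.sqrt W * Real.sinh (t / 2)) Set.univ :=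
    hmono.injective.injOn
  have hgauss : Integrable (fun u : ℝ => Real.exp (-(1 / 2 : ℝ) * u ^ 2)) :=
    integrable_exp_neg_mul_sq (by norm_num)
  have := (MeasureTheory.integrableOn_image_iff_integrableOn_abs_deriv_smul
    MeasurableSet.univ hderiv hinj (fun u => Real.exp (-(1 / 2 : ℝ) * u ^ 2))).1
    (hgauss.integrableOn)
  rw [MeasureTheory.integrableOn_univ] at this
  refine this.congr ?_
  filter_upwards with t
  rw [phi_comp W hW t, smul_eq_mul,
    abs_of_nonneg (by positivity : (0:ℝ) ≤ Real.sqrt W * Real.cosh (t / 2))]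

private lemma f_bound (hW : 0 < W) (t : ℝ) :
    ‖Real.sqrt W * Real.exp (-(2 * W) * Real.sinh (t / 2) ^ 2) * Real.exp (-(t / 2))‖
      ≤ 2 * (Real.sqrt W * Real.cosh (t / 2) * Real.exp (-(2 * W) * Real.sinh (t / 2) ^ 2)) := by
  rw [Real.norm_eq_abs, abs_of_nonneg (by positivity)]
  have h1 : Real.exp (-(t / 2)) ≤ 2 * Real.cosh (t / 2) := by
    rw [Real.cosh_eq]
    have := Real.exp_pos (t / 2)
    rw [← neg_div]
    linarith
  calc Real.sqrt W * Real.exp (-(2 * W) * Real.sinh (t / 2) ^ 2) * Real.exp (-(t / 2))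
      ≤ Real.sqrt W * Real.exp (-(2 * W) * Real.sinh (t / 2) ^ 2) * (2 * Real.cosh (t / 2)) := by
        exact mul_le_mul_of_nonneg_left h1 (by positivity)
    _ = 2 * (Real.sqrt W * Real.cosh (t / 2) * Real.exp (-(2 * W) * Real.sinh (t / 2) ^ 2)) := by
        ring

private lemma integrable_f (hW : 0 < W) :
    Integrable (fun t : ℝ =>
      Real.sqrt W * Real.exp (-(2 * W) * Real.sinh (t / 2) ^ 2) * Real.exp (-(t / 2))) := by
  refine Integrable.mono ((integrable_J W hW).const_mul 2) ?_ ?_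
  · apply Continuous.aestronglyMeasurable
    fun_prop
  · filter_upwards with t
    rw [Real.norm_eq_abs (2 * _), abs_of_nonneg (by positivity)]
    exact f_bound W hW t

private lemma integral_f (hW : 0 < W) :
    ∫ t : ℝ, Real.sqrt W * Real.exp (-(2 * W) * Real.sinh (t / 2) ^ 2) * Real.exp (-(t / 2))
      = Real.sqrt (2 * π) := by
  set f : ℝ → ℝ := fun t =>
    Real.sqrt W * Real.exp (-(2 * W) * Real.sinh (t / 2) ^ 2) * Real.exp (-(t / 2)) with hf
  have hIf : Integrable f := integrable_f W hW
  have hneg : ∫ t : ℝ, f (-t) = ∫ t : ℝ, f t := integral_neg_eq_self f volume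
  have hsum : ∀ t : ℝ, f t + f (-t) =
      2 * (Real.sqrt W * Real.cosh (t / 2) * Real.exp (-(2 * W) * Real.sinh (t / 2) ^ 2)) := by
    intro t
    have hs : Real.sinh (-t / 2) ^ 2 = Real.sinh (t / 2) ^ 2 := by
      rw [neg_div, Real.sinh_neg]; ring
    simp only [hf, neg_div, Real.sinh_neg, neg_neg]
    rw [Real.cosh_eq]
    have : (-Real.sinh (t/2)) ^ 2 = Real.sinh (t/2) ^ 2 := by ring
    rw [this]
    ring
  have h2 : (∫ t : ℝ, f t) + (∫ t : ℝ, f (-t)) = 2 * Real.sqrt (2 * π) := by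
    rw [← integral_add hIf hIf.comp_neg]
    have : ∫ t : ℝ, (f t + f (-t)) =
        ∫ t : ℝ, 2 * (Real.sqrt W * Real.cosh (t / 2) *
          Real.exp (-(2 * W) * Real.sinh (t / 2) ^ 2)) := by
      congr 1; funext t; exact hsum t
    rw [this, integral_const_mul]
    have hJ := integral_J W hW
    have : ∫ t : ℝ, Real.sqrt W * Real.cosh (t / 2) *
        Real.exp (-(2 * W) * Real.sinh (t / 2) ^ 2) = Real.sqrt (2 * π) := by
      rw [← hJ]
      congr 1; funext t
      rw [phi_comp W hW t, smul_eq_mul,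
        abs_of_nonneg (by positivity : (0:ℝ) ≤ Real.sqrt W * Real.cosh (t / 2))]
    rw [this]
  rw [hneg] at h2
  linarith

end aux

/-- The one-point effective `H^{2|2}` measure is a probability measure:
`∫ e^{-W(cosh t - 1)} √(W e^t) e^{-t} dt/√(2π) = 1` for every `W > 0`. -/
theorem onePoint_H22_normalization (W : ℝ) (hW : 0 < W) :
    ∫ t : ℝ, Real.exp (-W * (Real.cosh t - 1)) * Real.sqrt (W * Real.exp t) *
        Real.exp (-t) / Real.sqrt (2 * π) = 1 := by
  have hpi : Real.sqrt (2 * π) ≠ 0 := by positivity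
  have heq : ∀ t : ℝ, Real.exp (-W * (Real.cosh t - 1)) * Real.sqrt (W * Real.exp t) *
      Real.exp (-t) = Real.sqrt W * Real.exp (-(2 * W) * Real.sinh (t / 2) ^ 2) *
      Real.exp (-(t / 2)) := by
    intro t
    have hcosh : Real.cosh t - 1 = 2 * Real.sinh (t / 2) ^ 2 := by
      have h2 := Real.cosh_two_mul (t / 2)
      rw [show 2 * (t / 2) = t by ring] at h2
      nlinarith [Real.cosh_sq (t / 2)]
    have hsqrt : Real.sqrt (W * Real.exp t) = Real.sqrt W * Real.exp (t / 2) := by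
      have he : Real.exp t = Real.exp (t / 2) ^ 2 := by
        rw [sq, ← Real.exp_add]; congr 1; ring
      rw [Real.sqrt_mul hW.le, he, Real.sqrt_sq (Real.exp_pos _).le]
    rw [hcosh, hsqrt, show -W * (2 * Real.sinh (t / 2) ^ 2) = -(2 * W) * Real.sinh (t / 2) ^ 2
      by ring]
    have h := Real.exp_add (t / 2) (-t)
    rw [show t / 2 + -t = -(t / 2) by ring] at h
    calc Real.exp (-(2 * W) * Real.sinh (t / 2) ^ 2) * (Real.sqrt W * Real.exp (t / 2)) *
          Real.exp (-t)
        = Real.sqrt W * Real.exp (-(2 * W) * Real.sinh (t / 2) ^ 2) *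
            (Real.exp (t / 2) * Real.exp (-t)) := by ring
      _ = Real.sqrt W * Real.exp (-(2 * W) * Real.sinh (t / 2) ^ 2) * Real.exp (-(t / 2)) := by
          rw [← h]
  calc ∫ t : ℝ, Real.exp (-W * (Real.cosh t - 1)) * Real.sqrt (W * Real.exp t) *
        Real.exp (-t) / Real.sqrt (2 * π)
      = (∫ t : ℝ, Real.sqrt W * Real.exp (-(2 * W) * Real.sinh (t / 2) ^ 2) *
          Real.exp (-(t / 2))) / Real.sqrt (2 * π) := by
        rw [← integral_div]
        congr 1; funext t; rw [heq t]
    _ = 1 := by rw [integral_f W hW, div_self hpi]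
end
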